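/- Let a = (a₁, a₂, a₃) and b = (b₁, b₂, b₃) be vectors in ℝ³ with ‖a‖ ≤ 1, ‖b‖ ≤ 1 and ‖a + b‖ ≤ 1. Then (a₁² + a₂²)(b₁² + b₂²) − (a₁ b₁ + a₂ b₂)² ≤ 3/4. -/

import Mathlib

/-!
Only the planar parts `a' = (a₁, a₂)`, `b' = (b₁, b₂)` enter. With `x = ‖a'‖²`, `y = ‖b'‖²` and
`t = ⟪a', b'⟫`, dropping the third coordinates from the hypotheses gives `x, y ≤ 1` and
`x + y + 2t = ‖a' + b'‖² ≤ 1`. If `x + y ≤ 1`, then `xy ≤ 1/4`. Otherwise `-2t ≥ x + y - 1 > 0`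
forces `4t² ≥ (x + y - 1)²`, and `4xy - (x + y - 1)² = 2(x + y) - 1 - (x - y)² ≤ 3`.
-/

lemma mul_sub_sq_le_three_quarters {x y t : ℝ} (hx₀ : 0 ≤ x) (hy₀ : 0 ≤ y) (hx₁ : x ≤ 1)
    (hy₁ : y ≤ 1) (hsum : x + y + 2 * t ≤ 1) : x * y - t ^ 2 ≤ 3 / 4 := by
  rcases le_or_gt (x + y) 1 with hle | hgt
  · nlinarith [sq_nonneg (x - y), sq_nonneg t]
  · have ht : (x + y - 1) ^ 2 ≤ 4 * t ^ 2 := by nlinarith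
    calc x * y - t ^ 2 ≤ x * y - (x + y - 1) ^ 2 / 4 := by linarith
      _ = (2 * (x + y) - 1 - (x - y) ^ 2) / 4 := by ring
      _ ≤ 3 / 4 := by linarith [sq_nonneg (x - y)]

theorem section6_B_le_three_quarters
    (a₁ a₂ a₃ b₁ b₂ b₃ : ℝ)
    (ha : a₁ ^ 2 + a₂ ^ 2 + a₃ ^ 2 ≤ 1)
    (hb : b₁ ^ 2 + b₂ ^ 2 + b₃ ^ 2 ≤ 1)
    (hab : (a₁ + b₁) ^ 2 + (a₂ + b₂) ^ 2 + (a₃ + b₃) ^ 2 ≤ 1) :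
    (a₁ ^ 2 + a₂ ^ 2) * (b₁ ^ 2 + b₂ ^ 2) - (a₁ * b₁ + a₂ * b₂) ^ 2 ≤ 3 / 4 :=
  mul_sub_sq_le_three_quarters (by positivity) (by positivity)
    (by linarith [sq_nonneg a₃]) (by linarith [sq_nonneg b₃])
    (by linarith [sq_nonneg (a₃ + b₃)])
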